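/- In the affine Coxeter group of type Ã₁, generated by reflections a₀, a₁ of the real line at points 0 and 1, the Coxeter element w = a₁a₀ can be written as a product of two reflections in exactly the ways w = a_{i+1} a_i for i ∈ ℤ, where a_i denotes the reflection at the integer point i; consequently the interval [1, w] in absolute order consists of 1, w, and the infinitely many reflections a_i, i ∈ ℤ. -/

import Mathlib

/-- The reflection of the real line at the integer point `i`: `x ↦ 2i - x`. -/
def reflAt (i : ℤ) : Equiv.Perm ℝ where
  toFun x := 2 * i - x
  invFun x := 2 * i - x
  left_inv x := by simp
  right_inv x := by simp

/-- The affine Coxeter group of type `Ã₁`: the group generated by the reflections at `0`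
and `1`. -/
def Wtilde : Subgroup (Equiv.Perm ℝ) := Subgroup.closure {reflAt 0, reflAt 1}

/-- The set of reflections of `Wtilde`: conjugates of the generators `a₀, a₁`. -/
def Reflections : Set (Equiv.Perm ℝ) :=
  {t | ∃ g ∈ Wtilde, g * reflAt 0 * g⁻¹ = t ∨ g * reflAt 1 * g⁻¹ = t}

noncomputable def wordLen {G : Type*} [Group G] (R : Set G) (g : G) : ℕ :=
  sInf {k | ∃ l : List G, (∀ x ∈ l, x ∈ R) ∧ l.length = k ∧ l.prod = g}

/-- Absolute order with respect to reflection length. -/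
noncomputable def absLe (u v : Equiv.Perm ℝ) : Prop :=
  wordLen Reflections u + wordLen Reflections (u⁻¹ * v) = wordLen Reflections v

/-!
Every element of `W` is either a translation `x ↦ x + 2n` or a reflection `x ↦ 2n - x`, and the
reflections of `W` are exactly the `aₙ`. A product of `k` reflections is a translation when `k`
is even and a reflection when `k` is odd, so the reflection length is `1` on reflections and `2`
on nontrivial translations. Since `aⱼ aᵢ` is the translation by `2(j - i)`, it equals `w` exactly
when `j = i + 1`. Finally `x ≤ w` splits `l(w) = 2` as `0 + 2`, `1 + 1` or `2 + 0`, which forces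
`x = 1`, `x` a reflection, or `x = w`; conversely `aᵢ⁻¹ w = aᵢ₋₁` has length `1`.
-/

open Equiv

section wordLen

variable {G : Type*} [Group G] {R : Set G}

lemma wordLen_le_length {l : List G} (hl : ∀ x ∈ l, x ∈ R) : wordLen R l.prod ≤ l.length :=
  Nat.sInf_le ⟨l, hl, rfl, rfl⟩

lemma exists_word_length_eq_wordLen {g : G}
    (hg : {k | ∃ l : List G, (∀ x ∈ l, x ∈ R) ∧ l.length = k ∧ l.prod = g}.Nonempty) :
    ∃ l : List G, (∀ x ∈ l, x ∈ R) ∧ l.length = wordLen R g ∧ l.prod = g :=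
  Nat.sInf_mem hg

lemma exists_word_of_wordLen_ne_zero {g : G} (h : wordLen R g ≠ 0) :
    ∃ l : List G, (∀ x ∈ l, x ∈ R) ∧ l.length = wordLen R g ∧ l.prod = g :=
  exists_word_length_eq_wordLen (Nat.nonempty_of_pos_sInf (Nat.pos_of_ne_zero h))

lemma wordLen_one : wordLen R (1 : G) = 0 :=
  Nat.le_zero.mp (wordLen_le_length (l := []) (by simp))

end wordLen

def transl (n : ℤ) : Perm ℝ where
  toFun x := x + 2 * n
  invFun x := x - 2 * n
  left_inv x := by ring
  right_inv x := by ring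

@[simp] lemma reflAt_apply (i : ℤ) (x : ℝ) : reflAt i x = 2 * i - x := rfl

@[simp] lemma transl_apply (n : ℤ) (x : ℝ) : transl n x = x + 2 * n := rfl

lemma reflAt_mul_reflAt (m n : ℤ) : reflAt m * reflAt n = transl (m - n) :=
  Equiv.ext fun x => by simp only [Perm.mul_apply, reflAt_apply, transl_apply]; push_cast; ring

lemma transl_mul_transl (m n : ℤ) : transl m * transl n = transl (m + n) :=
  Equiv.ext fun x => by simp only [Perm.mul_apply, transl_apply]; push_cast; ring

lemma transl_mul_reflAt (m n : ℤ) : transl m * reflAt n = reflAt (m + n) :=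
  Equiv.ext fun x => by simp only [Perm.mul_apply, reflAt_apply, transl_apply]; push_cast; ring

lemma reflAt_mul_transl (m n : ℤ) : reflAt m * transl n = reflAt (m - n) :=
  Equiv.ext fun x => by simp only [Perm.mul_apply, reflAt_apply, transl_apply]; push_cast; ring

lemma reflAt_inv (i : ℤ) : (reflAt i)⁻¹ = reflAt i := rfl

lemma transl_zero : transl 0 = 1 := Equiv.ext fun x => by simp

lemma transl_inv (n : ℤ) : (transl n)⁻¹ = transl (-n) := by
  rw [inv_eq_iff_mul_eq_one, transl_mul_transl, add_neg_cancel, transl_zero]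

lemma transl_injective : Function.Injective transl := fun m n h => by
  simpa using congrArg (· 0) h

lemma reflAt_injective : Function.Injective reflAt := fun m n h => by
  simpa using congrArg (· 0) h

lemma transl_ne_reflAt (m n : ℤ) : transl m ≠ reflAt n := fun h => by
  have h0 := congrArg (· 0) h
  have h1 := congrArg (· 1) h
  simp only [transl_apply, reflAt_apply] at h0 h1
  linarith

lemma transl_eq_zpow (n : ℤ) : transl n = transl 1 ^ n := by
  induction n using Int.induction_on with
  | zero => rw [zpow_zero, transl_zero]
  | succ k ih => rw [zpow_add_one, ← ih, transl_mul_transl]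
  | pred k ih => rw [zpow_sub_one, ← ih, transl_inv, transl_mul_transl, sub_eq_add_neg]

lemma transl_mem_wtilde (n : ℤ) : transl n ∈ Wtilde := by
  have hw : transl 1 ∈ Wtilde := by
    rw [show (1 : ℤ) = 1 - 0 from rfl, ← reflAt_mul_reflAt]
    exact mul_mem (Subgroup.subset_closure (by simp)) (Subgroup.subset_closure (by simp))
  rw [transl_eq_zpow]
  exact zpow_mem hw n

lemma transl_or_reflAt_of_mem_wtilde {g : Perm ℝ} (hg : g ∈ Wtilde) :
    (∃ n, g = transl n) ∨ ∃ n, g = reflAt n := by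
  induction hg using Subgroup.closure_induction with
  | mem x hx =>
    rcases hx with rfl | rfl
    exacts [Or.inr ⟨0, rfl⟩, Or.inr ⟨1, rfl⟩]
  | one => exact Or.inl ⟨0, transl_zero.symm⟩
  | mul x y _ _ hx hy =>
    rcases hx with ⟨m, rfl⟩ | ⟨m, rfl⟩ <;> rcases hy with ⟨n, rfl⟩ | ⟨n, rfl⟩
    · exact Or.inl ⟨m + n, transl_mul_transl m n⟩
    · exact Or.inr ⟨m + n, transl_mul_reflAt m n⟩
    · exact Or.inr ⟨m - n, reflAt_mul_transl m n⟩
    · exact Or.inl ⟨m - n, reflAt_mul_reflAt m n⟩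
  | inv x _ hx =>
    rcases hx with ⟨m, rfl⟩ | ⟨m, rfl⟩
    exacts [Or.inl ⟨-m, transl_inv m⟩, Or.inr ⟨m, reflAt_inv m⟩]

lemma exists_conj_reflAt_eq_reflAt {g : Perm ℝ} (hg : g ∈ Wtilde) (k : ℤ) :
    ∃ i, g * reflAt k * g⁻¹ = reflAt i := by
  rcases transl_or_reflAt_of_mem_wtilde hg with ⟨m, rfl⟩ | ⟨m, rfl⟩
  · rw [transl_inv, transl_mul_reflAt, reflAt_mul_transl]; exact ⟨_, rfl⟩
  · rw [reflAt_inv, reflAt_mul_reflAt, transl_mul_reflAt]; exact ⟨_, rfl⟩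

lemma reflAt_mem_reflections (i : ℤ) : reflAt i ∈ Reflections := by
  obtain ⟨k, rfl | rfl⟩ := Int.even_or_odd' i
  · refine ⟨transl k, transl_mem_wtilde k, Or.inl ?_⟩
    rw [transl_inv, transl_mul_reflAt, reflAt_mul_transl]
    congr 1; ring
  · refine ⟨transl k, transl_mem_wtilde k, Or.inr ?_⟩
    rw [transl_inv, transl_mul_reflAt, reflAt_mul_transl]
    congr 1; ring

lemma mem_reflections_iff {t : Perm ℝ} : t ∈ Reflections ↔ ∃ i, t = reflAt i := by
  constructor
  · rintro ⟨g, hg, rfl | rfl⟩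
    exacts [(exists_conj_reflAt_eq_reflAt hg 0).imp fun _ => id,
      (exists_conj_reflAt_eq_reflAt hg 1).imp fun _ => id]
  · rintro ⟨i, rfl⟩
    exact reflAt_mem_reflections i

lemma prod_eq_transl_or_reflAt {l : List (Perm ℝ)} (hl : ∀ x ∈ l, x ∈ Reflections) :
    (Even l.length ∧ ∃ n, l.prod = transl n) ∨ (Odd l.length ∧ ∃ n, l.prod = reflAt n) := by
  induction l with
  | nil => exact Or.inl ⟨⟨0, rfl⟩, 0, transl_zero.symm⟩
  | cons a l ih =>
    obtain ⟨j, rfl⟩ := mem_reflections_iff.mp (hl a List.mem_cons_self)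
    rw [List.length_cons, List.prod_cons]
    rcases ih fun x hx => hl x (List.mem_cons_of_mem _ hx) with ⟨hev, n, hn⟩ | ⟨hodd, n, hn⟩
    · exact Or.inr ⟨hev.add_one, j - n, by rw [hn, reflAt_mul_transl]⟩
    · exact Or.inl ⟨hodd.add_one, j - n, by rw [hn, reflAt_mul_reflAt]⟩

lemma exists_eq_reflAt_of_wordLen_eq_one {g : Perm ℝ} (h : wordLen Reflections g = 1) :
    ∃ i, g = reflAt i := by
  obtain ⟨l, hl, hlen, rfl⟩ := exists_word_of_wordLen_ne_zero (h ▸ one_ne_zero)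
  rcases prod_eq_transl_or_reflAt hl with ⟨hev, -⟩ | ⟨-, hg⟩
  · rw [hlen, h] at hev
    exact absurd hev Nat.not_even_one
  · exact hg

lemma exists_eq_transl_of_wordLen_eq_two {g : Perm ℝ} (h : wordLen Reflections g = 2) :
    ∃ n, g = transl n := by
  obtain ⟨l, hl, hlen, rfl⟩ := exists_word_of_wordLen_ne_zero (h ▸ two_ne_zero)
  rcases prod_eq_transl_or_reflAt hl with ⟨-, hg⟩ | ⟨hodd, -⟩
  · exact hg
  · rw [hlen, h] at hodd
    exact absurd hodd (by decide)

lemma wordLen_reflAt (i : ℤ) : wordLen Reflections (reflAt i) = 1 := by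
  have hword : ∀ x ∈ [reflAt i], x ∈ Reflections := by simp [reflAt_mem_reflections]
  obtain ⟨l, hl, hlen, hprod⟩ := exists_word_length_eq_wordLen ⟨1, _, hword, rfl, List.prod_singleton⟩
  have hodd : Odd l.length := by
    rcases prod_eq_transl_or_reflAt hl with ⟨-, n, hn⟩ | ⟨hodd, -⟩
    · exact absurd (hn ▸ hprod) (transl_ne_reflAt n i)
    · exact hodd
  have hle : wordLen Reflections (reflAt i) ≤ 1 := by simpa using wordLen_le_length hword
  obtain ⟨k, hk⟩ := hodd
  omega

lemma wordLen_transl_of_ne_zero {n : ℤ} (hn : n ≠ 0) : wordLen Reflections (transl n) = 2 := by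
  have hword : ∀ x ∈ [reflAt n, reflAt 0], x ∈ Reflections := by simp [reflAt_mem_reflections]
  have hprod : [reflAt n, reflAt 0].prod = transl n := by simp [reflAt_mul_reflAt]
  obtain ⟨l, hl, hlen, hl_prod⟩ := exists_word_length_eq_wordLen ⟨2, _, hword, rfl, hprod⟩
  have hle := hprod ▸ wordLen_le_length hword
  have hne_zero : l.length ≠ 0 := fun h0 => by
    rw [List.length_eq_zero_iff.mp h0, List.prod_nil, ← transl_zero] at hl_prod
    exact hn (transl_injective hl_prod.symm)
  have hne_one : l.length ≠ 1 := fun h1 => by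
    rcases prod_eq_transl_or_reflAt hl with ⟨hev, -⟩ | ⟨-, m, hm⟩
    · exact Nat.not_even_one (h1 ▸ hev)
    · exact transl_ne_reflAt n m (hl_prod ▸ hm)
  simp only [List.length_cons, List.length_nil] at hle
  omega

lemma wordLen_transl_eq_zero_iff {n : ℤ} : wordLen Reflections (transl n) = 0 ↔ n = 0 := by
  refine ⟨fun h => ?_, fun h => h ▸ transl_zero ▸ wordLen_one⟩
  by_contra hn
  rw [wordLen_transl_of_ne_zero hn] at h
  exact two_ne_zero h

lemma absLe_transl_iff {n : ℤ} (hn : n ≠ 0) {x : Perm ℝ} :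
    absLe x (transl n) ↔ x = 1 ∨ x = transl n ∨ ∃ i, x = reflAt i := by
  rw [absLe, wordLen_transl_of_ne_zero hn]
  constructor
  · intro h
    rcases (by omega : (wordLen Reflections x = 0 ∧ wordLen Reflections (x⁻¹ * transl n) = 2) ∨
        wordLen Reflections x = 1 ∨ (wordLen Reflections x = 2 ∧
        wordLen Reflections (x⁻¹ * transl n) = 0)) with ⟨hx, hy⟩ | hx | ⟨hx, hy⟩
    · obtain ⟨m, hm⟩ := exists_eq_transl_of_wordLen_eq_two hy
      have hxm : x = transl (n + -m) := by
        rw [← transl_mul_transl, ← transl_inv, ← hm]; group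
      rw [hxm, wordLen_transl_eq_zero_iff] at hx
      exact Or.inl (by rw [hxm, hx, transl_zero])
    · exact Or.inr (Or.inr (exists_eq_reflAt_of_wordLen_eq_one hx))
    · obtain ⟨m, rfl⟩ := exists_eq_transl_of_wordLen_eq_two hx
      rw [transl_inv, transl_mul_transl, wordLen_transl_eq_zero_iff, neg_add_eq_zero] at hy
      exact Or.inr (Or.inl (by rw [hy]))
  · rintro (rfl | rfl | ⟨i, rfl⟩)
    · rw [wordLen_one, inv_one, one_mul, wordLen_transl_of_ne_zero hn]
    · rw [wordLen_transl_of_ne_zero hn, inv_mul_cancel, wordLen_one]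
    · rw [reflAt_inv, reflAt_mul_transl, wordLen_reflAt, wordLen_reflAt]

/-- In type `Ã₁`, the Coxeter element `w = a₁a₀` (the translation `x ↦ x + 2`) can be
written as a product of two reflections exactly in the ways `w = a_{i+1} aᵢ`, `i ∈ ℤ`;
consequently the interval `[1, w]` in absolute order consists of `1`, `w`, and the
reflections `aᵢ`, `i ∈ ℤ`. -/
theorem coxeter_element_factorizations_A1tilde :
    (∀ u v : Equiv.Perm ℝ, u ∈ Reflections → v ∈ Reflections →
      (u * v = reflAt 1 * reflAt 0 ↔ ∃ i : ℤ, u = reflAt (i + 1) ∧ v = reflAt i)) ∧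
    (∀ x : Equiv.Perm ℝ, absLe x (reflAt 1 * reflAt 0) ↔
      (x = 1 ∨ x = reflAt 1 * reflAt 0 ∨ ∃ i : ℤ, x = reflAt i)) := by
  have hw : reflAt 1 * reflAt 0 = transl 1 := reflAt_mul_reflAt 1 0
  refine ⟨fun u v hu hv => ?_, fun x => hw ▸ absLe_transl_iff one_ne_zero⟩
  obtain ⟨j, rfl⟩ := mem_reflections_iff.mp hu
  obtain ⟨i, rfl⟩ := mem_reflections_iff.mp hv
  rw [hw, reflAt_mul_reflAt, transl_injective.eq_iff, sub_eq_iff_eq_add']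
  constructor
  · rintro rfl
    exact ⟨i, by rw [add_comm], rfl⟩
  · rintro ⟨k, hj, hi⟩
    rw [reflAt_injective hj, reflAt_injective hi, add_comm]
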